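/- arXiv:1306.3448 — 2 statements merged into one kernel-verified Lean document; each statement's English description precedes it below -/
import Mathlib

section
/- Let W and Y be strictly positive random variables such that Y is stochastically dominated by W₀Y₀ + W₁Y₁, where (W₀,W₁) and (Y₀,Y₁) are pairs of copies of W and Y respectively, all four variables independent. Then the Laplace transform φ(t) = E[e^{-tY}] satisfies φ(t) ≥ P(W ≤ t^{-1/2})² · φ(t^{1/2})² for all t ≥ 1. -/
/-!
Stochastic domination `Y ⪯ S := W₀Y₀ + W₁Y₁` turns into `E e^{-tS} ≤ E e^{-tY}` through the
layer-cake formula, since `{e^{-tX} > s}` is a lower tail of `X`. On the event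
`{W₀ ≤ t^{-1/2}, W₁ ≤ t^{-1/2}}` one has `e^{-tS} ≥ e^{-√t Y₀} e^{-√t Y₁}`, and by independence
the expectation of the indicator of that event times `e^{-√t Y₀} e^{-√t Y₁}` factors as
`P(W ≤ t^{-1/2})² φ(√t)²`.
-/

open MeasureTheory ProbabilityTheory Real
open scoped ProbabilityTheory

section

variable {Ω : Type*} [MeasurableSpace Ω] {μ : Measure Ω}

def StochasticallyLE (μ : Measure Ω) (Y X : Ω → ℝ) : Prop :=
  ∀ y, μ {ω | y ≤ Y ω} ≤ μ {ω | y ≤ X ω}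

namespace StochasticallyLE

variable [IsProbabilityMeasure μ] {X Y : Ω → ℝ}

theorem measure_lt_le (h : StochasticallyLE μ Y X) (hX : AEMeasurable X μ)
    (hY : AEMeasurable Y μ) (c : ℝ) : μ {ω | X ω < c} ≤ μ {ω | Y ω < c} := by
  have hcompl : ∀ Z : Ω → ℝ, AEMeasurable Z μ → μ {ω | Z ω < c} = 1 - μ {ω | c ≤ Z ω} := by
    intro Z hZ
    rw [← prob_compl_eq_one_sub₀ (nullMeasurableSet_le aemeasurable_const hZ)]
    simp only [Set.compl_ofPred, not_le]
  rw [hcompl X hX, hcompl Y hY]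
  exact tsub_le_tsub_left (h c) 1

theorem lintegral_exp_neg_mul_le (h : StochasticallyLE μ Y X) (hX : AEMeasurable X μ)
    (hY : AEMeasurable Y μ) {t : ℝ} (ht : 0 < t) :
    ∫⁻ ω, ENNReal.ofReal (exp (-t * X ω)) ∂μ ≤ ∫⁻ ω, ENNReal.ofReal (exp (-t * Y ω)) ∂μ := by
  have hsuperlevel : ∀ {s : ℝ}, 0 < s → ∀ Z : Ω → ℝ,
      {ω | s < exp (-t * Z ω)} = {ω | Z ω < -log s / t} := by
    intro s hs Z
    ext ω
    simp only [Set.mem_ofPred_eq]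
    rw [← log_lt_iff_lt_exp hs, lt_div_iff₀ ht]
    constructor <;> intro h <;> linarith
  rw [lintegral_eq_lintegral_meas_lt μ (ae_of_all _ fun _ ↦ (exp_pos _).le)
      (hX.const_mul _).exp,
    lintegral_eq_lintegral_meas_lt μ (ae_of_all _ fun _ ↦ (exp_pos _).le)
      (hY.const_mul _).exp]
  refine setLIntegral_mono' measurableSet_Ioi fun s hs ↦ ?_
  rw [hsuperlevel hs X, hsuperlevel hs Y]
  exact h.measure_lt_le hX hY _

theorem integral_exp_neg_mul_le (h : StochasticallyLE μ Y X) (hX : AEMeasurable X μ)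
    (hY : AEMeasurable Y μ) {t : ℝ} (ht : 0 < t)
    (hYint : Integrable (fun ω ↦ exp (-t * Y ω)) μ) :
    ∫ ω, exp (-t * X ω) ∂μ ≤ ∫ ω, exp (-t * Y ω) ∂μ := by
  have hpos : ∀ Z : Ω → ℝ, 0 ≤ᵐ[μ] fun ω ↦ exp (-t * Z ω) :=
    fun _ ↦ ae_of_all _ fun _ ↦ (exp_pos _).le
  rw [integral_eq_lintegral_of_nonneg_ae (hpos X) (hX.const_mul _).exp.aestronglyMeasurable,
    integral_eq_lintegral_of_nonneg_ae (hpos Y) (hY.const_mul _).exp.aestronglyMeasurable]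
  exact ENNReal.toReal_mono hYint.lintegral_lt_top.ne (h.lintegral_exp_neg_mul_le hX hY ht)

end StochasticallyLE

theorem integrable_exp_neg_mul_of_nonneg [IsFiniteMeasure μ] {X : Ω → ℝ}
    (hX : AEMeasurable X μ) (hX0 : 0 ≤ᵐ[μ] X) {t : ℝ} (ht : 0 ≤ t) :
    Integrable (fun ω ↦ exp (-t * X ω)) μ := by
  refine Integrable.of_bound (C := 1) (hX.const_mul _).exp.aestronglyMeasurable ?_
  filter_upwards [hX0] with ω hω
  rw [norm_of_nonneg (exp_pos _).le, exp_le_one_iff]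
  exact mul_nonpos_of_nonpos_of_nonneg (neg_nonpos.2 ht) hω

namespace ProbabilityTheory.IdentDistrib

variable {Ω' : Type*} [MeasurableSpace Ω'] {ν : Measure Ω'} {Z : Ω → ℝ} {V : Ω' → ℝ}

theorem ae_nonneg (h : IdentDistrib Z V μ ν) (hV : 0 ≤ᵐ[ν] V) : 0 ≤ᵐ[μ] Z :=
  h.symm.ae_snd measurableSet_Ici hV

end ProbabilityTheory.IdentDistrib

theorem integral_indicator_Iic_comp {Z : Ω → ℝ} (hZ : AEMeasurable Z μ) (r : ℝ) :
    ∫ ω, (Set.Iic r).indicator 1 (Z ω) ∂μ = μ.real {ω | Z ω ≤ r} := by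
  change ∫ ω, (Z ⁻¹' Set.Iic r).indicator 1 ω ∂μ = _
  rw [integral_indicator₀ (hZ.nullMeasurable measurableSet_Iic)]
  simp only [Pi.one_apply]
  rw [setIntegral_const, smul_eq_mul, mul_one]
  rfl

theorem integral_comp_mul_comp_mul_comp_mul_comp
    {W Y W₀ W₁ Y₀ Y₁ : Ω → ℝ} (hindep : iIndepFun ![W₀, W₁, Y₀, Y₁] μ)
    (hW₀ : IdentDistrib W₀ W μ μ) (hW₁ : IdentDistrib W₁ W μ μ)
    (hY₀ : IdentDistrib Y₀ Y μ μ) (hY₁ : IdentDistrib Y₁ Y μ μ)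
    {f g : ℝ → ℝ} (hf : Measurable f) (hg : Measurable g) :
    ∫ ω, f (W₀ ω) * f (W₁ ω) * g (Y₀ ω) * g (Y₁ ω) ∂μ
      = (∫ ω, f (W ω) ∂μ) ^ 2 * (∫ ω, g (Y ω) ∂μ) ^ 2 := by
  have hprod := hindep.integral_fun_prod_comp (f := ![f, f, g, g])
    (fun i ↦ by
      fin_cases i
      exacts [hW₀.aemeasurable_fst, hW₁.aemeasurable_fst, hY₀.aemeasurable_fst,
        hY₁.aemeasurable_fst])
    (fun i ↦ by
      fin_cases i
      exacts [hf.aestronglyMeasurable, hf.aestronglyMeasurable, hg.aestronglyMeasurable,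
        hg.aestronglyMeasurable])
  have hcomp : ∀ {Z V : Ω → ℝ} {φ : ℝ → ℝ}, IdentDistrib Z V μ μ → Measurable φ →
      ∫ ω, φ (Z ω) ∂μ = ∫ ω, φ (V ω) ∂μ := fun h hφ ↦ (h.comp hφ).integral_eq
  simp only [Fin.prod_univ_four, Matrix.cons_val] at hprod
  rw [hprod, hcomp hW₀ hf, hcomp hW₁ hf, hcomp hY₀ hg, hcomp hY₁ hg]
  ring

theorem indicator_mul_indicator_mul_exp_mul_exp_le {t u r w₀ w₁ y₀ y₁ : ℝ} (ht : 0 ≤ t)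
    (htr : t * r = u) (hy₀ : 0 ≤ y₀) (hy₁ : 0 ≤ y₁) :
    (Set.Iic r).indicator 1 w₀ * (Set.Iic r).indicator 1 w₁ * exp (-u * y₀) * exp (-u * y₁)
      ≤ exp (-t * (w₀ * y₀ + w₁ * y₁)) := by
  by_cases hw₀ : w₀ ≤ r
  · by_cases hw₁ : w₁ ≤ r
    · rw [Set.indicator_of_mem (Set.mem_Iic.2 hw₀), Set.indicator_of_mem (Set.mem_Iic.2 hw₁)]
      simp only [Pi.one_apply, one_mul]
      rw [← exp_add, exp_le_exp, ← htr]
      nlinarith [mul_le_mul_of_nonneg_right hw₀ hy₀, mul_le_mul_of_nonneg_right hw₁ hy₁]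
    · rw [Set.indicator_of_notMem (mt Set.mem_Iic.1 hw₁), mul_zero, zero_mul, zero_mul]
      positivity
  · rw [Set.indicator_of_notMem (mt Set.mem_Iic.1 hw₀), zero_mul, zero_mul, zero_mul]
    positivity

theorem integral_indicator_mul_exp_le_integral_exp [IsFiniteMeasure μ] {W₀ W₁ Y₀ Y₁ : Ω → ℝ}
    (hS : AEMeasurable (fun ω ↦ W₀ ω * Y₀ ω + W₁ ω * Y₁ ω) μ) (hW₀ : 0 ≤ᵐ[μ] W₀)
    (hW₁ : 0 ≤ᵐ[μ] W₁) (hY₀ : 0 ≤ᵐ[μ] Y₀) (hY₁ : 0 ≤ᵐ[μ] Y₁) {t u r : ℝ} (ht : 0 ≤ t)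
    (htr : t * r = u) :
    ∫ ω, (Set.Iic r).indicator 1 (W₀ ω) * (Set.Iic r).indicator 1 (W₁ ω)
        * exp (-u * Y₀ ω) * exp (-u * Y₁ ω) ∂μ
      ≤ ∫ ω, exp (-t * (W₀ ω * Y₀ ω + W₁ ω * Y₁ ω)) ∂μ := by
  have hind : ∀ w, 0 ≤ (Set.Iic r).indicator (1 : ℝ → ℝ) w :=
    Set.indicator_nonneg fun _ _ ↦ zero_le_one
  have hS0 : 0 ≤ᵐ[μ] fun ω ↦ W₀ ω * Y₀ ω + W₁ ω * Y₁ ω := by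
    filter_upwards [hW₀, hW₁, hY₀, hY₁] with ω h₀ h₁ h₂ h₃
    exact add_nonneg (mul_nonneg h₀ h₂) (mul_nonneg h₁ h₃)
  refine integral_mono_of_nonneg (ae_of_all _ fun ω ↦
      mul_nonneg (mul_nonneg (mul_nonneg (hind _) (hind _)) (exp_pos _).le) (exp_pos _).le)
    (integrable_exp_neg_mul_of_nonneg hS hS0 ht) ?_
  filter_upwards [hY₀, hY₁] with ω h₀ h₁
  exact indicator_mul_indicator_mul_exp_mul_exp_le ht htr h₀ h₁

end

theorem laplace_lower_recursive_bound_general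
    {Ω : Type*} [MeasureSpace Ω] [IsProbabilityMeasure (ℙ : Measure Ω)]
    (W Y W₀ W₁ Y₀ Y₁ : Ω → ℝ)
    (hWpos : ∀ ω, 0 < W ω) (hYpos : ∀ ω, 0 < Y ω)
    (hindep : iIndepFun ![W₀, W₁, Y₀, Y₁] ℙ)
    (hW₀d : IdentDistrib W₀ W ℙ ℙ) (hW₁d : IdentDistrib W₁ W ℙ ℙ)
    (hY₀d : IdentDistrib Y₀ Y ℙ ℙ) (hY₁d : IdentDistrib Y₁ Y ℙ ℙ)
    (hdom : ∀ y : ℝ, ℙ {ω | y ≤ Y ω} ≤ ℙ {ω | y ≤ W₀ ω * Y₀ ω + W₁ ω * Y₁ ω}) :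
    ∀ t : ℝ, 1 ≤ t →
      (ℙ {ω | W ω ≤ t ^ (-(1 / 2) : ℝ)}).toReal ^ 2
          * (∫ ω, Real.exp (-(t ^ ((1 : ℝ) / 2)) * Y ω)) ^ 2
        ≤ ∫ ω, Real.exp (-t * Y ω) := by
  intro t ht
  have ht0 : 0 < t := one_pos.trans_le ht
  set r := t ^ (-(1 / 2) : ℝ)
  set u := t ^ ((1 : ℝ) / 2)
  have htr : t * r = u := by
    rw [← rpow_one_add' ht0.le (by norm_num)]
    norm_num [u]
  have hW0 : 0 ≤ᵐ[ℙ] W := ae_of_all _ fun ω ↦ (hWpos ω).le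
  have hY0 : 0 ≤ᵐ[ℙ] Y := ae_of_all _ fun ω ↦ (hYpos ω).le
  have hS : AEMeasurable (fun ω ↦ W₀ ω * Y₀ ω + W₁ ω * Y₁ ω) :=
    (hW₀d.aemeasurable_fst.mul hY₀d.aemeasurable_fst).add
      (hW₁d.aemeasurable_fst.mul hY₁d.aemeasurable_fst)
  calc
    _ = ∫ ω, (Set.Iic r).indicator 1 (W₀ ω) * (Set.Iic r).indicator 1 (W₁ ω)
          * exp (-u * Y₀ ω) * exp (-u * Y₁ ω) := by
      have hexp : Measurable fun y ↦ exp (-u * y) := by fun_prop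
      refine Eq.symm ((integral_comp_mul_comp_mul_comp_mul_comp hindep hW₀d hW₁d hY₀d hY₁d
        (measurable_one.indicator measurableSet_Iic) hexp).trans ?_)
      rw [integral_indicator_Iic_comp hW₀d.aemeasurable_snd, measureReal_def]
    _ ≤ ∫ ω, exp (-t * (W₀ ω * Y₀ ω + W₁ ω * Y₁ ω)) :=
      integral_indicator_mul_exp_le_integral_exp hS (hW₀d.ae_nonneg hW0) (hW₁d.ae_nonneg hW0)
        (hY₀d.ae_nonneg hY0) (hY₁d.ae_nonneg hY0) ht0.le htr
    _ ≤ ∫ ω, exp (-t * Y ω) :=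
      StochasticallyLE.integral_exp_neg_mul_le hdom hS hY₀d.aemeasurable_snd ht0
        (integrable_exp_neg_mul_of_nonneg hY₀d.aemeasurable_snd hY0 ht0.le)

theorem laplace_lower_recursive_bound
    {Ω : Type*} [MeasureSpace Ω] [IsProbabilityMeasure (ℙ : Measure Ω)]
    (W Y W₀ W₁ Y₀ Y₁ : Ω → ℝ)
    (hWmeas : Measurable W) (hYmeas : Measurable Y)
    (hW₀meas : Measurable W₀) (hW₁meas : Measurable W₁)
    (hY₀meas : Measurable Y₀) (hY₁meas : Measurable Y₁)
    (hWpos : ∀ ω, 0 < W ω) (hYpos : ∀ ω, 0 < Y ω)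
    (hindep : iIndepFun ![W₀, W₁, Y₀, Y₁] ℙ)
    (hW₀d : IdentDistrib W₀ W ℙ ℙ) (hW₁d : IdentDistrib W₁ W ℙ ℙ)
    (hY₀d : IdentDistrib Y₀ Y ℙ ℙ) (hY₁d : IdentDistrib Y₁ Y ℙ ℙ)
    (hdom : ∀ y : ℝ, ℙ {ω | y ≤ Y ω} ≤ ℙ {ω | y ≤ W₀ ω * Y₀ ω + W₁ ω * Y₁ ω}) :
    ∀ t : ℝ, 1 ≤ t →
      (ℙ {ω | W ω ≤ t ^ (-(1 / 2) : ℝ)}).toReal ^ 2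
          * (∫ ω, Real.exp (-(t ^ ((1 : ℝ) / 2)) * Y ω)) ^ 2
        ≤ ∫ ω, Real.exp (-t * Y ω) :=
  laplace_lower_recursive_bound_general W Y W₀ W₁ Y₀ Y₁ hWpos hYpos hindep hW₀d hW₁d hY₀d hY₁d hdom
end

section
/- Let W be a positive random variable with Laplace-type quantities φ(t) = E[e^{-tY}] for a positive random variable Y, and set ψ(t) = E[φ(tW)²], with W independent of Y. Suppose there exist c, c_α > 0, γ > α ≥ 1 and t_α > 0 such that P(W ≤ x) ≤ exp(-c(log 1/x)^γ) for small x and φ(t) ≤ exp(-c_α (log t)^α) for t ≥ t_α. Then there exist C_α > 0 and t̃_α > 0 such that ψ(t) ≤ exp(-C_α (log t)^α) for all t ≥ t̃_α. -/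
/-!
On the event `{W ≤ t^{-1/2}}` bound `φ(tW)²` by `1`; off it, `tW ≥ √t` and `φ` is
nonincreasing on `[0, ∞)`, so `φ(tW)² ≤ φ(√t)²`. Hence
`ψ(t) ≤ exp(-c (log √t)^γ) + exp(-2 cα (log √t)^α)`, and because `γ > α` the first term is
eventually at most half of `exp(-cα (log √t)^α) = exp(-(cα / 2^α) (log t)^α)`, as is the second.
-/

open MeasureTheory ProbabilityTheory Real Filter

namespace MeasureTheory

variable {Ω : Type*} {m : MeasurableSpace Ω} {μ : Measure Ω} [IsProbabilityMeasure μ]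

lemma integral_le_measureReal_add {f : Ω → ℝ} {A : Set Ω} {b : ℝ} (hA : MeasurableSet A)
    (hb : 0 ≤ b) (hf0 : ∀ ω, 0 ≤ f ω) (hf1 : ∀ ω ∈ A, f ω ≤ 1) (hfb : ∀ ω ∉ A, f ω ≤ b) :
    ∫ ω, f ω ∂μ ≤ μ.real A + b := by
  have hf : ∀ ω, f ω ≤ A.indicator (fun _ ↦ 1) ω + b := by
    intro ω
    by_cases hω : ω ∈ A
    · simpa [hω] using (hf1 ω hω).trans (le_add_of_nonneg_right hb)
    · simpa [hω] using hfb ω hω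
  calc ∫ ω, f ω ∂μ ≤ ∫ ω, (A.indicator (fun _ ↦ 1) ω + b) ∂μ :=
        integral_mono_of_nonneg (ae_of_all _ hf0)
          (((integrable_const 1).indicator hA).add (integrable_const b)) (ae_of_all _ hf)
    _ = μ.real A + b := by
        rw [integral_add ((integrable_const 1).indicator hA) (integrable_const b),
          integral_indicator_const _ hA]
        simp

end MeasureTheory

namespace ProbabilityTheory

variable {Ω : Type*} {m : MeasurableSpace Ω} {μ : Measure Ω} {X : Ω → ℝ}

lemma integrable_exp_mul_of_nonpos_of_nonneg [IsFiniteMeasure μ] {t : ℝ} (hX : AEMeasurable X μ)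
    (hX0 : ∀ᵐ ω ∂μ, 0 ≤ X ω) (ht : t ≤ 0) : Integrable (fun ω ↦ exp (t * X ω)) μ := by
  refine .of_mem_Icc 0 1 (measurable_exp.comp_aemeasurable (hX.const_mul t)) ?_
  filter_upwards [hX0] with ω hω
  exact ⟨(exp_pos _).le, exp_le_one_iff.2 (mul_nonpos_of_nonpos_of_nonneg ht hω)⟩

lemma mgf_le_one_of_nonpos [IsProbabilityMeasure μ] {t : ℝ} (hX0 : ∀ᵐ ω ∂μ, 0 ≤ X ω)
    (ht : t ≤ 0) : mgf X μ t ≤ 1 := by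
  calc mgf X μ t ≤ mgf 0 μ t := mgf_anti_of_nonpos hX0 ht (by simp)
    _ = 1 := by simp [mgf_zero_fun]

lemma monotoneOn_mgf_of_nonneg [IsFiniteMeasure μ] (hX : AEMeasurable X μ)
    (hX0 : ∀ᵐ ω ∂μ, 0 ≤ X ω) : MonotoneOn (mgf X μ) (Set.Iic 0) := by
  intro s _ t ht hst
  refine integral_mono_ae (integrable_exp_mul_of_nonpos_of_nonneg hX hX0 (hst.trans ht))
    (integrable_exp_mul_of_nonpos_of_nonneg hX hX0 ht) ?_
  filter_upwards [hX0] with ω hω using exp_le_exp.2 (mul_le_mul_of_nonneg_right hst hω)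

variable {Ω' : Type*} {m' : MeasurableSpace Ω'} {ν : Measure Ω'} [IsProbabilityMeasure ν]

lemma integral_mgf_mul_sq_le [IsProbabilityMeasure μ] {W : Ω → ℝ} {Y : Ω' → ℝ}
    (hW : Measurable W) (hW0 : ∀ ω, 0 ≤ W ω) (hY : AEMeasurable Y ν) (hY0 : ∀ᵐ ω ∂ν, 0 ≤ Y ω)
    {t x : ℝ} (ht : 0 ≤ t) (hx : 0 ≤ x) :
    ∫ ω, mgf Y ν (-(t * W ω)) ^ 2 ∂μ ≤ μ.real {ω | W ω ≤ x} + mgf Y ν (-(t * x)) ^ 2 := by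
  refine integral_le_measureReal_add (measurableSet_le hW measurable_const) (sq_nonneg _)
    (fun ω ↦ sq_nonneg _) (fun ω _ ↦ pow_le_one₀ mgf_nonneg ?_) (fun ω hω ↦ ?_)
  · exact mgf_le_one_of_nonpos hY0 (neg_nonpos.2 (mul_nonneg ht (hW0 ω)))
  · have hxW : x ≤ W ω := (not_le.1 hω).le
    refine pow_le_pow_left₀ mgf_nonneg (monotoneOn_mgf_of_nonneg hY hY0 ?_ ?_ ?_) 2
    · exact neg_nonpos.2 (mul_nonneg ht (hW0 ω))
    · exact neg_nonpos.2 (mul_nonneg ht hx)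
    · exact neg_le_neg (mul_le_mul_of_nonneg_left hxW ht)

end ProbabilityTheory

lemma exp_neg_le_exp_neg_div_two {x y : ℝ} (h : x + log 2 ≤ y) : exp (-y) ≤ exp (-x) / 2 := by
  rw [← exp_log two_pos, ← exp_sub]
  exact exp_le_exp.2 (by linarith)

lemma tendsto_mul_rpow_sub_mul_rpow_atTop {a b α γ : ℝ} (ha : 0 < a) (hα : 0 < α)
    (hαγ : α < γ) : Tendsto (fun u : ℝ ↦ a * u ^ γ - b * u ^ α) atTop atTop := by
  have h : Tendsto (fun u : ℝ ↦ u ^ α * (a * u ^ (γ - α) - b)) atTop atTop :=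
    (tendsto_rpow_atTop hα).atTop_mul_atTop₀ (tendsto_atTop_add_const_right _ (-b)
      ((tendsto_rpow_atTop (sub_pos.2 hαγ)).const_mul_atTop ha))
  refine h.congr' ?_
  filter_upwards [eventually_gt_atTop 0] with u hu
  rw [mul_sub, mul_left_comm, ← rpow_add hu, add_sub_cancel, mul_comm (u ^ α)]

lemma eventually_exp_neg_mul_rpow_add_sq_le {a b α γ : ℝ} (ha : 0 < a) (hb : 0 < b)
    (hα : 0 < α) (hαγ : α < γ) :
    ∀ᶠ u in atTop, exp (-a * u ^ γ) + exp (-b * u ^ α) ^ 2 ≤ exp (-b * u ^ α) := by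
  filter_upwards [(tendsto_mul_rpow_sub_mul_rpow_atTop (b := b) ha hα hαγ).eventually_ge_atTop
      (log 2), ((tendsto_rpow_atTop hα).const_mul_atTop hb).eventually_ge_atTop (log 2)]
    with u hγ hα
  have h₁ : exp (-a * u ^ γ) ≤ exp (-b * u ^ α) / 2 := by
    rw [neg_mul, neg_mul]
    exact exp_neg_le_exp_neg_div_two (by linarith)
  have h₂ : exp (-b * u ^ α) ^ 2 ≤ exp (-b * u ^ α) / 2 := by
    rw [← exp_nat_mul, neg_mul, Nat.cast_ofNat, mul_neg, ← mul_assoc]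
    exact exp_neg_le_exp_neg_div_two (by linarith)
  linarith

lemma Filter.Eventually.exists_pos_forall_ge {p : ℝ → Prop} (h : ∀ᶠ t in atTop, p t) :
    ∃ t₀ > 0, ∀ t, t₀ ≤ t → p t := by
  obtain ⟨t₀, ht₀⟩ := eventually_atTop.1 (h.and (eventually_gt_atTop 0))
  exact ⟨t₀, (ht₀ t₀ le_rfl).2, fun t ht ↦ (ht₀ t ht).1⟩

theorem psi_decay_from_phi_decay_general
    {Ω : Type*} [MeasureSpace Ω] [IsProbabilityMeasure (ℙ : Measure Ω)]
    (W Y : Ω → ℝ)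
    (hWmeas : Measurable W) (hYmeas : Measurable Y)
    (hWpos : ∀ ω, 0 < W ω) (hYpos : ∀ ω, 0 < Y ω)
    (c cα γ α tα x' : ℝ) (hc : 0 < c) (hcα : 0 < cα) (hα : 1 ≤ α) (hαγ : α < γ)
    (hx'0 : 0 < x')
    (htail : ∀ x : ℝ, 0 < x → x ≤ x' →
      (ℙ {ω | W ω ≤ x}).toReal ≤ Real.exp (-c * (Real.log (1 / x)) ^ γ))
    (hφ : ∀ t : ℝ, tα ≤ t →
      ∫ ω, Real.exp (-t * Y ω) ≤ Real.exp (-cα * (Real.log t) ^ α)) :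
    ∃ Cα > 0, ∃ t₂ > 0, ∀ t : ℝ, t₂ ≤ t →
      ∫ ω, (∫ ω', Real.exp (-(t * W ω) * Y ω')) ^ 2
        ≤ Real.exp (-Cα * (Real.log t) ^ α) := by
  refine ⟨cα / 2 ^ α, by positivity, Eventually.exists_pos_forall_ge ?_⟩
  filter_upwards [eventually_gt_atTop 0, eventually_ge_atTop 1,
    tendsto_sqrt_atTop.eventually_ge_atTop tα,
    (tendsto_inv_atTop_zero.comp tendsto_sqrt_atTop).eventually (eventually_le_nhds hx'0),
    (tendsto_log_atTop.comp tendsto_sqrt_atTop).eventually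
      (eventually_exp_neg_mul_rpow_add_sq_le hc hcα (one_pos.trans_le hα) hαγ)]
    with t ht₀ ht₁ htα hx hdecay
  have hs : 0 < √t := sqrt_pos.2 ht₀
  calc ∫ ω, (∫ ω', exp (-(t * W ω) * Y ω')) ^ 2
      ≤ volume.real {ω | W ω ≤ (√t)⁻¹} + mgf Y ℙ (-(t * (√t)⁻¹)) ^ 2 :=
        integral_mgf_mul_sq_le hWmeas (fun ω ↦ (hWpos ω).le) hYmeas.aemeasurable
          (ae_of_all _ fun ω ↦ (hYpos ω).le) ht₀.le (inv_nonneg.2 hs.le)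
    _ ≤ exp (-c * log √t ^ γ) + exp (-cα * log √t ^ α) ^ 2 := by
        rw [← div_eq_mul_inv, div_sqrt]
        gcongr ?_ + ?_
        · simpa [measureReal_def] using htail _ (inv_pos.2 hs) hx
        · exact pow_le_pow_left₀ mgf_nonneg (hφ _ htα) 2
    _ ≤ exp (-cα * log √t ^ α) := hdecay
    _ = exp (-(cα / 2 ^ α) * log t ^ α) := by
        rw [log_sqrt ht₀.le, div_rpow (log_nonneg ht₁) zero_le_two]
        ring_nf

theorem psi_decay_from_phi_decay
    {Ω : Type*} [MeasureSpace Ω] [IsProbabilityMeasure (ℙ : Measure Ω)]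
    (W Y : Ω → ℝ)
    (hWmeas : Measurable W) (hYmeas : Measurable Y)
    (hWpos : ∀ ω, 0 < W ω) (hYpos : ∀ ω, 0 < Y ω)
    (hWYindep : IndepFun W Y ℙ)
    (c cα γ α tα x' : ℝ) (hc : 0 < c) (hcα : 0 < cα) (hα : 1 ≤ α) (hαγ : α < γ)
    (htα : 0 < tα) (hx'0 : 0 < x') (hx'1 : x' < 1)
    (htail : ∀ x : ℝ, 0 < x → x ≤ x' →
      (ℙ {ω | W ω ≤ x}).toReal ≤ Real.exp (-c * (Real.log (1 / x)) ^ γ))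
    (hφ : ∀ t : ℝ, tα ≤ t →
      ∫ ω, Real.exp (-t * Y ω) ≤ Real.exp (-cα * (Real.log t) ^ α)) :
    ∃ Cα > 0, ∃ t₂ > 0, ∀ t : ℝ, t₂ ≤ t →
      ∫ ω, (∫ ω', Real.exp (-(t * W ω) * Y ω')) ^ 2
        ≤ Real.exp (-Cα * (Real.log t) ^ α) :=
  psi_decay_from_phi_decay_general W Y hWmeas hYmeas hWpos hYpos c cα γ α tα x' hc hcα hα hαγ hx'0
    htail hφ
end
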